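/- arXiv:1601.03595 — 5 statements merged into one kernel-verified Lean document; each statement's English description precedes it below -/
import Mathlib

section
/- Let R be a commutative ring and p, q distinct prime ideals of R with neither contained in the other. Then the tensor product of residue fields κ(p) ⊗_R κ(q) is zero. -/
open IsLocalRing

/-- The residue field `κ(p) = R_p / p R_p` of a commutative ring at a prime ideal `p`,
viewed as an `R`-algebra. -/
noncomputable abbrev residueFieldAt {R : Type*} [CommRing R] (p : Ideal R) [p.IsPrime] :=
  ResidueField (Localization.AtPrime p)

/-- If `p` and `q` are prime ideals of a commutative ring `R` with neither contained in the
other, then `κ(p) ⊗_R κ(q) = 0`. -/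
theorem residueField_tensor_eq_zero_of_incomparable {R : Type*} [CommRing R]
    (p q : Ideal R) [p.IsPrime] [q.IsPrime] (hpq : ¬ p ≤ q) (hqp : ¬ q ≤ p) :
    Subsingleton (TensorProduct R (residueFieldAt p) (residueFieldAt q)) := by
  obtain ⟨x, hxp, hxq⟩ := SetLike.not_le_iff_exists.mp hpq
  set A := residueFieldAt p
  set B := residueFieldAt q
  have h0 : algebraMap R A x = 0 := by
    rw [IsScalarTower.algebraMap_apply R (Localization.AtPrime p) A x]
    show residue _ _ = 0
    rw [residue_eq_zero_iff]
    exact (IsLocalization.AtPrime.to_map_mem_maximal_iff _ p x).mpr hxp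
  have hB : algebraMap R B x ≠ 0 := by
    rw [IsScalarTower.algebraMap_apply R (Localization.AtPrime q) B x]
    show residue _ _ ≠ 0
    rw [Ne, residue_eq_zero_iff]
    intro h
    exact hxq ((IsLocalization.AtPrime.to_map_mem_maximal_iff _ q x).mp h)
  have key : (1 : A) ⊗ₜ[R] (algebraMap R B x) = (0 : TensorProduct R A B) := by
    calc (1 : A) ⊗ₜ[R] (algebraMap R B x) = (1 : A) ⊗ₜ[R] (x • (1 : B)) := by
          rw [Algebra.algebraMap_eq_smul_one]
      _ = (x • (1 : A)) ⊗ₜ[R] (1 : B) := (TensorProduct.smul_tmul x 1 1).symm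
      _ = (algebraMap R A x) ⊗ₜ[R] (1 : B) := by rw [Algebra.algebraMap_eq_smul_one]
      _ = 0 := by rw [h0, TensorProduct.zero_tmul]
  have hone : (1 : TensorProduct R A B) = 0 := by
    calc (1 : TensorProduct R A B)
        = (1 : A) ⊗ₜ[R] ((algebraMap R B x) * (algebraMap R B x)⁻¹) := by
          rw [mul_inv_cancel₀ hB]; rfl
      _ = ((1 : A) ⊗ₜ[R] (algebraMap R B x)) * ((1 : A) ⊗ₜ[R] (algebraMap R B x)⁻¹) := by
          rw [Algebra.TensorProduct.tmul_mul_tmul, one_mul]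
      _ = 0 := by rw [key, zero_mul]
  exact subsingleton_of_zero_eq_one hone.symm
end

section
/- Let K be an essentially small rigid tensor triangulated category. Then every thick tensor-ideal of K is radical: if I is a thick tensor-ideal and k^{⊗n} ∈ I for some n ≥ 1, then k ∈ I. In particular, if k^{⊗n} ≅ 0 then k ≅ 0. -/
open CategoryTheory Limits Pretriangulated MonoidalCategory

universe v u

variable (C : Type u) [Category.{v} C] [HasZeroObject C] [Preadditive C]
  [HasShift C ℤ] [∀ n : ℤ, (shiftFunctor C n).Additive] [Pretriangulated C]
  [MonoidalCategory C] [∀ X : C, (tensorLeft X).CommShift ℤ]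
  [∀ X : C, (tensorLeft X).IsTriangulated]

/-- A thick (triangulated, replete, summand-closed) subcategory, encoded by its
set of objects. -/
structure ThickSubcategory where
  /-- the objects of the subcategory -/
  mem : Set C
  zero_mem : ∀ X : C, IsZero X → X ∈ mem
  shift_mem : ∀ X ∈ mem, ∀ n : ℤ, X⟦n⟧ ∈ mem
  ext_mem : ∀ T ∈ distTriang C, T.obj₁ ∈ mem → T.obj₂ ∈ mem → T.obj₃ ∈ mem
  retract_mem : ∀ X Y : C, (∃ (i : X ⟶ Y) (r : Y ⟶ X), i ≫ r = 𝟙 X) → Y ∈ mem → X ∈ mem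

/-- A thick tensor-ideal: a thick subcategory closed under tensoring with arbitrary objects. -/
structure ThickTensorIdeal extends ThickSubcategory C where
  ideal : ∀ (k : C), ∀ l ∈ mem, k ⊗ l ∈ mem

/-- The canonical evaluation map `k^∨ ⊗ l ⟶ hom(k, l)`, where `k^∨ = hom(k, 𝟙)`. -/
noncomputable def evalMap {D : Type*} [Category D] [MonoidalCategory D] [MonoidalClosed D]
    (k l : D) : (ihom k).obj (𝟙_ D) ⊗ l ⟶ (ihom k).obj l :=
  MonoidalClosed.curry ((α_ k ((ihom k).obj (𝟙_ D)) l).inv ≫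
    (((ihom.ev k).app (𝟙_ D)) ▷ l) ≫ (λ_ l).hom)

/-- Iterated tensor power `k^{⊗ n}`, with `k^{⊗ 0} = 𝟙`. -/
def tpow (k : C) : ℕ → C
  | 0 => 𝟙_ C
  | n + 1 => k ⊗ tpow k n

/-- In an essentially small rigid tensor triangulated category every thick tensor-ideal is
radical: if `k^{⊗n} ∈ I` for some `n ≥ 1` then `k ∈ I`.  In particular, if `k^{⊗n} ≅ 0`
then `k ≅ 0`. -/
theorem ThickTensorIdeal.radical [EssentiallySmall.{v} C] [SymmetricCategory C]
    [MonoidalClosed C] (hRigid : ∀ k l : C, IsIso (evalMap k l)) :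
    (∀ (I : ThickTensorIdeal C) (k : C) (n : ℕ), 1 ≤ n → tpow C k n ∈ I.mem → k ∈ I.mem) ∧
    (∀ (k : C) (n : ℕ), 1 ≤ n → IsZero (tpow C k n) → IsZero k) := by
  classical
  -- membership is closed under isomorphism
  have mem_iso : ∀ (I : ThickTensorIdeal C) {X Y : C}, (X ≅ Y) → Y ∈ I.mem → X ∈ I.mem :=
    fun I X Y e h => I.retract_mem X Y ⟨e.hom, e.inv, e.hom_inv_id⟩ h
  -- the basic rigidity retract: `k` is a retract of `k ⊗ (k^∨ ⊗ k)`
  have retract : ∀ k : C, ∃ (i : k ⟶ k ⊗ ((ihom k).obj (𝟙_ C) ⊗ k))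
      (r : k ⊗ ((ihom k).obj (𝟙_ C) ⊗ k) ⟶ k), i ≫ r = 𝟙 k := by
    intro k
    refine ⟨(ρ_ k).inv ≫ (k ◁ (MonoidalClosed.curry (ρ_ k).hom ≫ inv (evalMap k k))),
      MonoidalClosed.uncurry (evalMap k k), ?_⟩
    rw [Category.assoc, ← MonoidalClosed.uncurry_natural_left, Category.assoc,
      IsIso.inv_hom_id, Category.comp_id, MonoidalClosed.uncurry_curry, Iso.inv_hom_id]
  have main : ∀ (I : ThickTensorIdeal C) (k : C) (n : ℕ), 1 ≤ n →
      tpow C k n ∈ I.mem → k ∈ I.mem := by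
    intro I k n hn hmem
    induction n with
    | zero => omega
    | succ n ih =>
      rcases Nat.eq_zero_or_pos n with h0 | hpos
      · subst h0
        simp only [tpow] at hmem
        exact mem_iso I (ρ_ k).symm hmem
      · refine ih hpos ?_
        obtain ⟨m, rfl⟩ : ∃ m, n = m + 1 := ⟨n - 1, by omega⟩
        set d := (ihom k).obj (𝟙_ C) with hd
        have h1 : d ⊗ tpow C k (m + 2) ∈ I.mem := I.ideal d _ hmem
        have h1' : d ⊗ (k ⊗ (k ⊗ tpow C k m)) ∈ I.mem := by
          simpa only [tpow] using h1
        have e : (k ⊗ (d ⊗ k)) ⊗ tpow C k m ≅ d ⊗ (k ⊗ (k ⊗ tpow C k m)) :=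
          (whiskerRightIso (α_ k d k).symm (tpow C k m)) ≪≫
          (whiskerRightIso (whiskerRightIso (β_ k d) k) (tpow C k m)) ≪≫
          (whiskerRightIso (α_ d k k) (tpow C k m)) ≪≫
          (α_ d (k ⊗ k) (tpow C k m)) ≪≫
          (whiskerLeftIso d (α_ k k (tpow C k m)))
        have h2 : (k ⊗ (d ⊗ k)) ⊗ tpow C k m ∈ I.mem := mem_iso I e h1'
        obtain ⟨i, r, hir⟩ := retract k
        have h3 : k ⊗ tpow C k m ∈ I.mem := by
          refine I.retract_mem _ _ ⟨i ▷ tpow C k m, r ▷ tpow C k m, ?_⟩ h2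
          rw [← comp_whiskerRight, hir, id_whiskerRight]
        simpa only [tpow] using h3
  refine ⟨main, fun k n hn hz => ?_⟩
  let I : ThickTensorIdeal C :=
    { mem := {X | IsZero X}
      zero_mem := fun X h => h
      shift_mem := fun X hX n => (shiftFunctor C n).map_isZero hX
      ext_mem := fun T hT h1 h2 => T.isZero₃_of_isZero₁₂ hT h1 h2
      retract_mem := by
        rintro X Y ⟨i, r, hir⟩ hY
        simp only [Set.mem_setOf_eq] at hY ⊢
        rw [IsZero.iff_id_eq_zero] at hY ⊢
        rw [← hir, ← Category.id_comp r, ← Category.assoc]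
        simp [hY]
      ideal := fun a l hl => (tensorLeft a).map_isZero hl }
  exact main I k n hn hz
end

section
/- Let K be an essentially small tensor triangulated category and P a prime thick tensor-ideal. Then the closure of {P} in the Zariski topology on Spc K is {Q ∈ Spc K : Q ⊆ P}. Consequently Spc K is a T0 space. -/
open CategoryTheory Limits Pretriangulated MonoidalCategory

universe v u

variable (C : Type u) [Category.{v} C] [HasZeroObject C] [Preadditive C]
  [HasShift C ℤ] [∀ n : ℤ, (shiftFunctor C n).Additive] [Pretriangulated C]
  [MonoidalCategory C] [∀ X : C, (tensorLeft X).CommShift ℤ]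
  [∀ X : C, (tensorLeft X).IsTriangulated]

/-- A prime thick tensor-ideal: proper, and `k ⊗ l ∈ P` implies `k ∈ P` or `l ∈ P`. -/
def ThickTensorIdeal.IsPrime (P : ThickTensorIdeal C) : Prop :=
  (∃ X : C, X ∉ P.mem) ∧ ∀ k l : C, k ⊗ l ∈ P.mem → k ∈ P.mem ∨ l ∈ P.mem

/-- The Balmer spectrum: the set of prime thick tensor-ideals. -/
def Spc := {P : ThickTensorIdeal C // P.IsPrime}

/-- The Zariski topology on `Spc`, generated by the basic open sets
`U(k) = {P | k ∈ P}` (equivalently, with basic closed sets `supp k = {P | k ∉ P}`). -/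
instance spcTopology : TopologicalSpace (Spc C) :=
  TopologicalSpace.generateFrom {U | ∃ k : C, U = {P : Spc C | k ∈ P.1.mem}}


theorem ThickTensorIdeal.ext' {P Q : ThickTensorIdeal C} (h : P.mem = Q.mem) : P = Q := by
  obtain ⟨⟨m, _, _, _, _⟩, _⟩ := P
  obtain ⟨⟨m', _, _, _, _⟩, _⟩ := Q
  simp only at h
  subst h
  rfl

theorem spc_closure_aux (P : Spc C) :
    closure {P} = {Q : Spc C | Q.1.mem ⊆ P.1.mem} := by
  ext Q
  constructor
  · intro hQ k hk
    have hopen : IsOpen {R : Spc C | k ∈ R.1.mem} :=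
      TopologicalSpace.GenerateOpen.basic _ ⟨k, rfl⟩
    have := (mem_closure_iff.mp hQ) _ hopen hk
    obtain ⟨R, hR, hR'⟩ := this
    rcases hR' with rfl
    exact hR
  · intro hsub
    rw [mem_closure_iff]
    intro U hU hQU
    refine ⟨P, ?_, rfl⟩
    induction hU with
    | basic V hV => obtain ⟨k, rfl⟩ := hV; exact hsub hQU
    | univ => trivial
    | inter V W _ _ ihV ihW => exact ⟨ihV hQU.1, ihW hQU.2⟩
    | sUnion S _ ih =>
        obtain ⟨V, hVS, hQV⟩ := hQU
        exact ⟨V, hVS, ih V hVS hQV⟩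

/-- The closure of a point `P` of the Balmer spectrum in the Zariski topology is
`{Q : Q ⊆ P}`; consequently `Spc K` is a T₀ space. -/
theorem spc_closure_singleton [EssentiallySmall.{v} C] :
    (∀ P : Spc C, closure {P} = {Q : Spc C | Q.1.mem ⊆ P.1.mem}) ∧ T0Space (Spc C) := by
  refine ⟨spc_closure_aux C, ?_⟩
  refine t0Space_iff_inseparable (Spc C) |>.mpr fun P Q h => ?_
  have h1 : P ∈ closure {Q} := specializes_iff_mem_closure.mp h.symm.specializes
  have h2 : Q ∈ closure {P} := specializes_iff_mem_closure.mp h.specializes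
  rw [spc_closure_aux] at h1 h2
  exact Subtype.ext (ThickTensorIdeal.ext' C (le_antisymm h1 h2))
end

section
/- Let (X, σ) be a support data on an essentially small tensor triangulated category K. Then for every point x ∈ X, the full subcategory f(x) = {k ∈ K : x ∉ σ(k)} is a prime thick tensor-ideal of K. -/
open CategoryTheory Limits Pretriangulated MonoidalCategory

universe v u

variable (C : Type u) [Category.{v} C] [HasZeroObject C] [Preadditive C]
  [HasShift C ℤ] [∀ n : ℤ, (shiftFunctor C n).Additive] [Pretriangulated C]
  [MonoidalCategory C] [∀ X : C, (tensorLeft X).CommShift ℤ]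
  [∀ X : C, (tensorLeft X).IsTriangulated]

section Aux

variable {C}

open ZeroObject in
/-- σ is invariant under isomorphism. -/
lemma sigma_iso_invariant {X : Type*} (σ : C → Set X)
    (hzero : ∀ k : C, IsZero k → σ k = ∅)
    (htriangle : ∀ T ∈ distTriang C, σ T.obj₂ ⊆ σ T.obj₁ ∪ σ T.obj₃)
    {a b : C} (e : a ≅ b) : σ b ⊆ σ a := by
  have hT : Triangle.mk e.hom (0 : b ⟶ 0) (0 : (0 : C) ⟶ a⟦(1:ℤ)⟧) ∈ distTriang C := by
    refine isomorphic_distinguished _ (contractible_distinguished a) _ ?_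
    refine Triangle.isoMk _ _ (Iso.refl a) e.symm (Iso.refl 0) ?_ ?_ ?_
    · exact e.hom_inv_id.trans (Category.comp_id _).symm
    · exact (zero_comp).trans (comp_zero).symm
    · exact IsZero.eq_of_src (isZero_zero C) _ _
  have := htriangle _ hT
  simpa [hzero _ (isZero_zero C)] using this

lemma sigma_iso_eq {X : Type*} (σ : C → Set X)
    (hzero : ∀ k : C, IsZero k → σ k = ∅)
    (htriangle : ∀ T ∈ distTriang C, σ T.obj₂ ⊆ σ T.obj₁ ∪ σ T.obj₃)
    {a b : C} (e : a ≅ b) : σ a = σ b :=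
  Set.Subset.antisymm (sigma_iso_invariant σ hzero htriangle e.symm)
    (sigma_iso_invariant σ hzero htriangle e)

lemma sigma_shift {X : Type*} (σ : C → Set X)
    (hzero : ∀ k : C, IsZero k → σ k = ∅)
    (hshift : ∀ k : C, σ (k⟦(1 : ℤ)⟧) = σ k)
    (htriangle : ∀ T ∈ distTriang C, σ T.obj₂ ⊆ σ T.obj₁ ∪ σ T.obj₃)
    (a : C) (n : ℤ) : σ (a⟦n⟧) = σ a := by
  induction n using Int.induction_on with
  | zero => exact sigma_iso_eq σ hzero htriangle ((shiftFunctorZero C ℤ).app a).symm |>.symm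
  | succ n ih =>
      rw [sigma_iso_eq σ hzero htriangle ((shiftFunctorAdd C (n : ℤ) 1).app a),
        Functor.comp_obj, hshift, ih]
  | pred n ih =>
      have : σ ((a⟦(-n - 1 : ℤ)⟧)⟦(1 : ℤ)⟧) = σ (a⟦(-n : ℤ)⟧) := by
        refine (sigma_iso_eq σ hzero htriangle ?_).symm
        exact (shiftFunctorAdd' C (-n - 1 : ℤ) 1 (-n : ℤ) (by ring)).app a
      rw [← ih, ← this, hshift]

end Aux

/-- Given a support data `(X, σ)` on an essentially small tensor triangulated category,
for every point `x ∈ X` the full subcategory `{k : x ∉ σ(k)}` is a prime thick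
tensor-ideal. -/
theorem support_data_gives_prime [EssentiallySmall.{v} C] [HasBinaryBiproducts C]
    (X : Type*) [TopologicalSpace X] (σ : C → Set X)
    (hclosed : ∀ k : C, IsClosed (σ k))
    (hunit : σ (𝟙_ C) = Set.univ)
    (hzero : ∀ k : C, IsZero k → σ k = ∅)
    (hsum : ∀ k l : C, σ (k ⊞ l) = σ k ∪ σ l)
    (hshift : ∀ k : C, σ (k⟦(1 : ℤ)⟧) = σ k)
    (htriangle : ∀ T ∈ distTriang C, σ T.obj₂ ⊆ σ T.obj₁ ∪ σ T.obj₃)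
    (htensor : ∀ k l : C, σ (k ⊗ l) = σ k ∩ σ l)
    (x : X) :
    ∃ I : ThickTensorIdeal C, I.mem = {k : C | x ∉ σ k} ∧ I.IsPrime := by
  refine ⟨{ mem := {k : C | x ∉ σ k}
            zero_mem := fun k hk => by simp [Set.mem_setOf_eq, hzero k hk]
            shift_mem := fun k hk n => by
              simpa [Set.mem_setOf_eq, sigma_shift σ hzero hshift htriangle k n] using hk
            ext_mem := fun T hT h₁ h₂ => by
              intro hx
              rcases htriangle _ (rot_of_distTriang T hT) hx with h | h
              · exact h₂ h
              · replace h : x ∈ σ (T.obj₁⟦(1:ℤ)⟧) := h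
                rw [sigma_shift σ hzero hshift htriangle] at h
                exact h₁ h
            retract_mem := fun k l ⟨i, r, hir⟩ hl => by
              obtain ⟨Z, p, w, hT⟩ := distinguished_cocone_triangle i
              have : Mono i := ⟨fun f g h => by
                have := congrArg (· ≫ r) h
                simpa [hir] using this⟩
              have hzero3 : (Triangle.mk i p w).mor₃ = 0 :=
                Triangle.mor₃_eq_zero_of_mono₁ _ hT this
              obtain ⟨e, _, _⟩ := exists_iso_binaryBiproduct_of_distTriang _ hT hzero3
              intro hx
              apply hl
              have h1 : σ l = σ (k ⊞ Z) := sigma_iso_eq σ hzero htriangle e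
              rw [h1, hsum]
              exact Or.inl hx
            ideal := fun k l hl => by
              intro hx
              rw [htensor] at hx
              exact hl hx.2 }, rfl, ?_, ?_⟩
  · exact ⟨𝟙_ C, by simp [Set.mem_setOf_eq, hunit]⟩
  · intro k l hkl
    rw [Set.mem_setOf_eq, htensor, Set.mem_inter_iff] at hkl
    push_neg at hkl
    by_cases hk : x ∈ σ k
    · exact Or.inr (hkl hk)
    · exact Or.inl hk
end

section
/- Every localising subcategory of a triangulated category with countable coproducts is thick, i.e. closed under direct summands. -/
open CategoryTheory Limits Pretriangulated

universe v u

variable (T : Type u) [Category.{v} T] [HasZeroObject T] [Preadditive T]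
  [HasShift T ℤ] [∀ n : ℤ, (shiftFunctor T n).Additive] [Pretriangulated T]
  [HasCountableCoproducts T]

/-- A localising subcategory of a triangulated category with countable coproducts:
a full triangulated subcategory closed under the (countable) coproducts existing in `T`,
encoded by its (isomorphism-closed) set of objects. -/
structure LocalisingSubcategory where
  /-- the objects of the subcategory -/
  mem : Set T
  zero_mem : ∀ X : T, IsZero X → X ∈ mem
  iso_mem : ∀ X Y : T, (X ≅ Y) → X ∈ mem → Y ∈ mem
  shift_mem : ∀ X ∈ mem, ∀ n : ℤ, X⟦n⟧ ∈ mem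
  ext_mem : ∀ Tr ∈ distTriang T, Tr.obj₁ ∈ mem → Tr.obj₂ ∈ mem → Tr.obj₃ ∈ mem
  coproduct_mem : ∀ (ι : Type v) [Countable ι] (f : ι → T), (∀ i, f i ∈ mem) → (∐ f) ∈ mem

/-- Every localising subcategory of a triangulated category with countable coproducts is
thick, i.e. closed under direct summands (retracts). -/
theorem localising_is_thick (L : LocalisingSubcategory T) (X Y : T)
    (h : ∃ (i : X ⟶ Y) (r : Y ⟶ X), i ≫ r = 𝟙 X) (hY : Y ∈ L.mem) : X ∈ L.mem := by
  obtain ⟨i, r, hir⟩ := h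
  have : HasBinaryBiproducts T := HasBinaryBiproducts.of_hasBinaryCoproducts
  set e : Y ⟶ Y := r ≫ i with he
  have hee : e ≫ e = e := by rw [he]; rw [Category.assoc, ← Category.assoc i r i, hir,
    Category.id_comp]
  have hie : i ≫ e = i := by rw [he, ← Category.assoc, hir, Category.id_comp]
  have her : e ≫ r = r := by rw [he, Category.assoc, hir, Category.comp_id]
  let κ : ULift.{v} ℕ → T := fun _ => Y
  let C : T := ∐ κ
  let ι : ∀ n : ℕ, Y ⟶ C := fun n => Sigma.ι κ (ULift.up n)
  let f : C ⟶ C := 𝟙 C - Sigma.desc (fun n => e ≫ ι (n.down + 1))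
  let g : C ⟶ X := Sigma.desc (fun _ => r)
  let v : X ⟶ C := i ≫ ι 0
  let hm : C ⟶ C := Sigma.desc
    (fun n => (𝟙 Y - e) ≫ ι n.down - ∑ m ∈ Finset.range n.down, e ≫ ι m)
  have hιf : ∀ n : ℕ, ι n ≫ f = ι n - e ≫ ι (n + 1) := by
    intro n
    simp [f, ι, Preadditive.comp_sub]
    exact Sigma.ι_desc _ _
  have hιh : ∀ n : ℕ, ι n ≫ hm = (𝟙 Y - e) ≫ ι n - ∑ m ∈ Finset.range n, e ≫ ι m := by
    intro n
    simp [hm, ι]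
  -- f ≫ hm = 𝟙 C
  have hfh : f ≫ hm = 𝟙 C := by
    apply Sigma.hom_ext
    rintro ⟨n⟩
    have : ι n ≫ f ≫ hm = ι n ≫ 𝟙 C := by
      rw [← Category.assoc, hιf, Preadditive.sub_comp, hιh, Category.assoc, hιh n.succ]
      simp only [Finset.sum_range_succ, Preadditive.comp_sub, Preadditive.comp_sum,
        Preadditive.sub_comp, ← Category.assoc, hee, Category.comp_id, Category.id_comp,
        Preadditive.comp_add]
      abel
    exact this
  have hfg : f ≫ g = 0 := by
    apply Sigma.hom_ext
    rintro ⟨n⟩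
    have : ι n ≫ f ≫ g = 0 := by
      rw [← Category.assoc, hιf, Preadditive.sub_comp, Category.assoc]
      simp [g, ι, her]
    simpa [ι] using this
  have hvh : v ≫ hm = 0 := by
    have : (i ≫ ι 0) ≫ hm = 0 := by
      rw [Category.assoc, hιh]
      simp [Preadditive.comp_sub, ← Category.assoc, hie]
    simpa [v] using this
  have hvg : v ≫ g = 𝟙 X := by
    simp [v, g, ι, hir]
  have hhf : hm ≫ f + g ≫ v = 𝟙 C := by
    apply Sigma.hom_ext
    rintro ⟨n⟩
    have : ι n ≫ (hm ≫ f + g ≫ v) = ι n ≫ 𝟙 C := by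
      rw [Preadditive.comp_add, ← Category.assoc, hιh, Preadditive.sub_comp,
        Category.assoc, hιf, Preadditive.sum_comp]
      have h1 : (𝟙 Y - e) ≫ (ι n - e ≫ ι (n + 1)) = ι n - e ≫ ι n := by
        simp only [Preadditive.sub_comp, Preadditive.comp_sub, Category.id_comp,
          ← Category.assoc, hee]
        abel
      have h2 : ∀ m ∈ Finset.range n, (e ≫ ι m) ≫ f = e ≫ ι m - e ≫ ι (m + 1) := by
        intro m _
        rw [Category.assoc, hιf, Preadditive.comp_sub, ← Category.assoc, hee]
      rw [Finset.sum_congr rfl h2, Finset.sum_sub_distrib]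
      have h3 : ι n ≫ g ≫ v = e ≫ ι 0 := by
        simp [g, v, ι, he]
      have h4 : (∑ m ∈ Finset.range n, e ≫ ι m) - (∑ m ∈ Finset.range n, e ≫ ι (m + 1))
          = e ≫ ι 0 - e ≫ ι n := by
        rw [← Finset.sum_range_sub' (fun m => e ≫ ι m) n]
        rw [Finset.sum_sub_distrib]
      rw [h3, h1, h4]
      simp only [Category.comp_id]
      abel
    exact this
  -- the isomorphism C ≅ C ⊞ X
  let β : C ⟶ C ⊞ X := biprod.lift hm g
  let α : C ⊞ X ⟶ C := biprod.desc f v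
  have hαβ : α ≫ β = 𝟙 (C ⊞ X) := by
    apply biprod.hom_ext' <;> apply biprod.hom_ext <;>
      simp [α, β, hfh, hfg, hvh, hvg]
  have hβα : β ≫ α = 𝟙 C := by
    simp [α, β, biprod.lift_desc, hhf]
  have hCmem : C ∈ L.mem := L.coproduct_mem _ κ (fun _ => hY)
  have hCXmem : (C ⊞ X) ∈ L.mem :=
    L.iso_mem C (C ⊞ X) ⟨β, α, hβα, hαβ⟩ hCmem
  exact L.ext_mem _ (binaryBiproductTriangle_distinguished C X) hCmem hCXmem
end
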